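/- Let A be an N×N reaction matrix with strongly connected graph, X_∞ > 0 with A X_∞ = 0, and let X(t) solve X' = A X with ∑_i u_i(0) = ∑_i u_{i,∞}. Then with E(X - X_∞ | X_∞) = ∑_i (u_i - u_{i,∞})²/u_{i,∞}, there exists λ > 0 such that E(X(t) - X_∞ | X_∞) ≤ e^{-λ t} E(X(0) - X_∞ | X_∞) for all t ≥ 0; in particular X(t) → X_∞ exponentially fast. -/

import Mathlib

/-!
Write `z = (X - X∞) / X∞`. Since `A X∞ = 0` and the columns of `A` sum to zero, the weighted
matrix `B = A · diag X∞` has zero row and column sums, so `d/dt E = 2 ⟨z, B z⟩` equals minus the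
Dirichlet form `∑ B_ij (z_i - z_j)²`. Mass conservation gives `∑ X∞_i z_i = 0`, and on that
hyperplane the Dirichlet form of the strongly connected graph dominates `λ ∑ X∞_i z_i² = λ E`
(a compactness argument: the form only vanishes on constants). Grönwall then gives
`E(t) ≤ e^{-λ t} E(0)`.
-/

open Finset Matrix Metric

theorem exists_pos_mul_le_of_homogeneous {E : Type*} [NormedAddCommGroup E] [NormedSpace ℝ E]
    [FiniteDimensional ℝ E] {f g : E → ℝ} (hf : Continuous f) (hg : Continuous g)
    (hf_smul : ∀ (c : ℝ) z, f (c • z) = c ^ 2 * f z)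
    (hg_smul : ∀ (c : ℝ) z, g (c • z) = c ^ 2 * g z)
    (hf_pos : ∀ z ≠ 0, 0 < f z) : ∃ c > 0, ∀ z, c * g z ≤ f z := by
  rcases subsingleton_or_nontrivial E with hE | hE
  · refine ⟨1, one_pos, fun z => ?_⟩
    have hz : z = (0 : ℝ) • z := Subsingleton.elim _ _
    rw [hz, hf_smul, hg_smul]
    simp
  have hS : (sphere (0 : E) 1).Nonempty := NormedSpace.sphere_nonempty.mpr zero_le_one
  obtain ⟨u, hu, hu_min⟩ := (isCompact_sphere (0 : E) 1).exists_isMinOn hS hf.continuousOn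
  obtain ⟨v, -, hv_max⟩ := (isCompact_sphere (0 : E) 1).exists_isMaxOn hS hg.continuousOn
  have hfu : 0 < f u := hf_pos u (ne_zero_of_mem_unit_sphere ⟨u, hu⟩)
  set M := max (g v) 1
  have hM : 0 < M := lt_max_of_lt_right one_pos
  refine ⟨f u / M, by positivity, fun z => ?_⟩
  obtain ⟨r, y, hy, rfl⟩ : ∃ r : ℝ, ∃ y ∈ sphere (0 : E) 1, z = r • y := by
    rcases eq_or_ne z 0 with rfl | hz
    · exact ⟨0, u, hu, by simp⟩
    · exact ⟨‖z‖, ‖z‖⁻¹ • z, by simp [norm_smul, hz], by simp [smul_smul, hz]⟩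
  have hgy : f u / M * g y ≤ f u := by
    rw [div_mul_eq_mul_div, div_le_iff₀ hM]
    exact mul_le_mul_of_nonneg_left ((hv_max hy).trans (le_max_left _ _)) hfu.le
  have hfy : f u ≤ f y := hu_min hy
  calc f u / M * g (r • y) = r ^ 2 * (f u / M * g y) := by rw [hg_smul]; ring
    _ ≤ r ^ 2 * f y := mul_le_mul_of_nonneg_left (hgy.trans hfy) (sq_nonneg r)
    _ = f (r • y) := (hf_smul r y).symm

theorem mul_sq_sub_nonneg_of_offDiag_nonneg {ι : Type*} {B : Matrix ι ι ℝ}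
    (hoff : ∀ i j, i ≠ j → 0 ≤ B i j) (z : ι → ℝ) (i j : ι) : 0 ≤ B i j * (z i - z j) ^ 2 := by
  rcases eq_or_ne i j with rfl | hij
  · simp
  · exact mul_nonneg (hoff i j hij) (sq_nonneg _)

section DirichletForm

variable {ι : Type*} [Fintype ι]

def dirichletForm (B : Matrix ι ι ℝ) (z : ι → ℝ) : ℝ :=
  ∑ i, ∑ j, B i j * (z i - z j) ^ 2

theorem dirichletForm_smul (B : Matrix ι ι ℝ) (c : ℝ) (z : ι → ℝ) :
    dirichletForm B (c • z) = c ^ 2 * dirichletForm B z := by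
  simp only [dirichletForm, mul_sum, Pi.smul_apply, smul_eq_mul]
  exact sum_congr rfl fun i _ => sum_congr rfl fun j _ => by ring

theorem continuous_dirichletForm (B : Matrix ι ι ℝ) : Continuous (dirichletForm B) := by
  unfold dirichletForm
  fun_prop

theorem two_mul_dotProduct_mulVec_eq_neg_dirichletForm {B : Matrix ι ι ℝ}
    (hrow : ∀ i, ∑ j, B i j = 0) (hcol : ∀ j, ∑ i, B i j = 0) (z : ι → ℝ) :
    2 * (z ⬝ᵥ B *ᵥ z) = -dirichletForm B z := by
  have hexpand : dirichletForm B z = ∑ i, (∑ j, B i j) * z i ^ 2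
      - 2 * ∑ i, ∑ j, z i * (B i j * z j) + ∑ j, (∑ i, B i j) * z j ^ 2 := by
    simp only [dirichletForm, sum_mul, mul_sum]
    rw [sum_comm (f := fun j i => B i j * z j ^ 2), ← sum_sub_distrib, ← sum_add_distrib]
    exact sum_congr rfl fun i _ => by
      rw [← sum_sub_distrib, ← sum_add_distrib]; exact sum_congr rfl fun j _ => by ring
  simp only [hexpand, hrow, hcol, zero_mul, sum_const_zero, dotProduct, mulVec, mul_sum]
  ring

theorem dirichletForm_nonneg {B : Matrix ι ι ℝ} (hoff : ∀ i j, i ≠ j → 0 ≤ B i j)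
    (z : ι → ℝ) : 0 ≤ dirichletForm B z :=
  sum_nonneg fun i _ => sum_nonneg fun j _ => mul_sq_sub_nonneg_of_offDiag_nonneg hoff z i j

theorem apply_eq_of_dirichletForm_eq_zero {B : Matrix ι ι ℝ} (hoff : ∀ i j, i ≠ j → 0 ≤ B i j)
    (hconn : ∀ u v : ι, Relation.ReflTransGen (fun x y => x ≠ y ∧ 0 < B y x) u v)
    {z : ι → ℝ} (hz : dirichletForm B z = 0) (u v : ι) : z u = z v := by
  have hterm : ∀ i j, B i j * (z i - z j) ^ 2 = 0 := by
    intro i j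
    have hnonneg := mul_sq_sub_nonneg_of_offDiag_nonneg hoff z
    rw [dirichletForm, sum_eq_zero_iff_of_nonneg fun i _ => sum_nonneg fun j _ => hnonneg i j]
      at hz
    exact (sum_eq_zero_iff_of_nonneg fun j _ => hnonneg i j).mp (hz i (mem_univ i)) j (mem_univ j)
  induction hconn u v with
  | refl => rfl
  | @tail x y _ hxy ih =>
    have := hterm y x
    rw [mul_eq_zero, sq_eq_zero_iff, sub_eq_zero] at this
    exact ih.trans (this.resolve_left hxy.2.ne').symm

theorem exists_pos_mul_le_dirichletForm {B : Matrix ι ι ℝ} (hoff : ∀ i j, i ≠ j → 0 ≤ B i j)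
    (hconn : ∀ u v : ι, Relation.ReflTransGen (fun x y => x ≠ y ∧ 0 < B y x) u v)
    {w : ι → ℝ} (hw : ∀ i, 0 < w i) :
    ∃ lam > 0, ∀ z : ι → ℝ, ∑ i, w i * z i = 0 →
      lam * ∑ i, w i * z i ^ 2 ≤ dirichletForm B z := by
  -- The penalty term makes the form positive definite on all of `ι → ℝ`, not just on `w⊥`.
  have hpos : ∀ z ≠ 0, 0 < dirichletForm B z + (∑ i, w i * z i) ^ 2 := by
    intro z hz
    by_contra! hle
    have hD := dirichletForm_nonneg hoff z
    have hD0 : dirichletForm B z = 0 := by nlinarith [sq_nonneg (∑ i, w i * z i)]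
    have hsum : ∑ i, w i * z i = 0 := by nlinarith [sq_nonneg (∑ i, w i * z i)]
    obtain ⟨i, hi⟩ := Function.ne_iff.mp hz
    have hconst := apply_eq_of_dirichletForm_eq_zero hoff hconn hD0 (u := i)
    have hwsum : ∑ j, w j ≠ 0 := (sum_pos (fun j _ => hw j) ⟨i, mem_univ i⟩).ne'
    simp only [← hconst, ← sum_mul, mul_eq_zero, hwsum, false_or] at hsum
    exact hi hsum
  obtain ⟨lam, hlam, hle⟩ := exists_pos_mul_le_of_homogeneous
    (f := fun z => dirichletForm B z + (∑ i, w i * z i) ^ 2) (g := fun z => ∑ i, w i * z i ^ 2)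
    ((continuous_dirichletForm B).add (by fun_prop)) (by fun_prop)
    (fun c z => by
      simp only [dirichletForm_smul, Pi.smul_apply, smul_eq_mul, mul_left_comm _ c, ← mul_sum]
      ring)
    (fun c z => by
      simp only [Pi.smul_apply, smul_eq_mul, mul_sum]
      exact sum_congr rfl fun i _ => by ring)
    hpos
  exact ⟨lam, hlam, fun z hz => by simpa [hz] using hle z⟩

end DirichletForm

theorem le_exp_neg_mul_of_hasDerivAt_le {f f' : ℝ → ℝ} {lam t : ℝ}
    (hf : ∀ s, HasDerivAt f (f' s) s) (hbound : ∀ s, f' s ≤ -lam * f s) (ht : 0 ≤ t) :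
    f t ≤ Real.exp (-lam * t) * f 0 := by
  have := le_gronwallBound_of_liminf_deriv_right_le (K := -lam) (ε := 0) (a := 0) (b := t)
    (fun s _ => (hf s).continuousAt.continuousWithinAt)
    (fun s _ r hr => (hf s).hasDerivWithinAt.liminf_right_slope_le hr) le_rfl
    (fun s _ => (add_zero (-lam * f s)).symm ▸ hbound s) t ⟨ht, le_rfl⟩
  rwa [gronwallBound_ε0, sub_zero, mul_comm] at this

section ReactionNetwork

variable {ι : Type*} [Fintype ι]

noncomputable def chiSq (x w : ι → ℝ) : ℝ :=
  ∑ i, (x i - w i) ^ 2 / w i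

theorem chiSq_eq_sum_mul_sq {w : ι → ℝ} (hw : ∀ i, w i ≠ 0) (x : ι → ℝ) :
    chiSq x w = ∑ i, w i * ((x - w) / w) i ^ 2 :=
  sum_congr rfl fun i _ => by simp only [Pi.div_apply, Pi.sub_apply]; field_simp [hw i]

theorem hasDerivAt_chiSq {X : ℝ → ι → ℝ} {X' : ι → ℝ} {t : ℝ}
    (hX : ∀ i, HasDerivAt (fun s => X s i) (X' i) t) (w : ι → ℝ) :
    HasDerivAt (fun s => chiSq (X s) w) (2 * (((X t - w) / w) ⬝ᵥ X')) t := by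
  simp only [dotProduct, mul_sum]
  refine HasDerivAt.fun_sum fun i _ => ?_
  refine ((((hX i).sub_const (w i)).fun_pow 2).div_const (w i)).congr_deriv ?_
  simp only [Pi.div_apply, Pi.sub_apply]
  ring

theorem sum_mulVec_eq_zero {A : Matrix ι ι ℝ} (hcol : ∀ j, ∑ i, A i j = 0) (x : ι → ℝ) :
    ∑ i, (A *ᵥ x) i = 0 := by
  simp only [mulVec, dotProduct]
  rw [sum_comm]
  exact sum_eq_zero fun j _ => by rw [← sum_mul, hcol, zero_mul]

theorem sum_eq_of_hasDerivAt_mulVec {A : Matrix ι ι ℝ} (hcol : ∀ j, ∑ i, A i j = 0)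
    {X : ℝ → ι → ℝ} (hX : ∀ i t, HasDerivAt (fun s => X s i) ((A *ᵥ X t) i) t) (t : ℝ) :
    ∑ i, X t i = ∑ i, X 0 i := by
  have hsum : ∀ s, HasDerivAt (fun r => ∑ i, X r i) 0 s := fun s => by
    simpa [sum_mulVec_eq_zero hcol] using HasDerivAt.fun_sum fun i (_ : i ∈ univ) => hX i s
  exact is_const_of_deriv_eq_zero (fun s => (hsum s).differentiableAt) (fun s => (hsum s).deriv) t 0

theorem mulVec_eq_mul_diagonal_mulVec [DecidableEq ι] {A : Matrix ι ι ℝ} {w : ι → ℝ}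
    (hw : ∀ i, w i ≠ 0) (hAw : A *ᵥ w = 0) (x : ι → ℝ) :
    A *ᵥ x = (A * diagonal w) *ᵥ ((x - w) / w) := by
  have : diagonal w *ᵥ ((x - w) / w) = x - w := funext fun i => by
    rw [mulVec_diagonal, Pi.div_apply, mul_div_cancel₀ _ (hw i)]
  rw [← mulVec_mulVec, this, mulVec_sub, hAw, sub_zero]

end ReactionNetwork

theorem exponential_convergence_to_equilibrium_ode
    (N : ℕ) (A : Matrix (Fin N) (Fin N) ℝ)
    (hoff : ∀ i j, i ≠ j → 0 ≤ A i j)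
    (hcol : ∀ j, ∑ i, A i j = 0)
    (hconn : ∀ u v : Fin N, Relation.ReflTransGen (fun x y => x ≠ y ∧ 0 < A y x) u v)
    (Xinf : Fin N → ℝ) (hXinf : ∀ i, 0 < Xinf i) (heq : A.mulVec Xinf = 0)
    (X : ℝ → Fin N → ℝ)
    (hX : ∀ i t, HasDerivAt (fun s => X s i) ((A.mulVec (X t)) i) t)
    (hmass : ∑ i, X 0 i = ∑ i, Xinf i) :
    ∃ lam > 0, ∀ t ≥ (0 : ℝ),
      ∑ i, (X t i - Xinf i) ^ 2 / Xinf i ≤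
        Real.exp (-lam * t) * ∑ i, (X 0 i - Xinf i) ^ 2 / Xinf i := by
  have hXinf₀ : ∀ i, Xinf i ≠ 0 := fun i => (hXinf i).ne'
  set B := A * diagonal Xinf
  have hBrow : ∀ i, ∑ j, B i j = 0 := fun i => by
    simpa [B, mul_diagonal, mulVec, dotProduct] using congrFun heq i
  have hBcol : ∀ j, ∑ i, B i j = 0 := fun j => by simp [B, mul_diagonal, ← sum_mul, hcol]
  obtain ⟨lam, hlam, hgap⟩ := exists_pos_mul_le_dirichletForm (B := B)
    (fun i j hij => by simpa [B] using mul_nonneg (hoff i j hij) (hXinf j).le)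
    (fun u v => Relation.ReflTransGen.mono (fun x y h => ⟨h.1, by simpa [B] using mul_pos h.2 (hXinf x)⟩) u v (hconn u v))
    hXinf
  have hdecay : ∀ s, -dirichletForm B ((X s - Xinf) / Xinf) ≤ -lam * chiSq (X s) Xinf := by
    intro s
    have hcentered : ∑ i, Xinf i * ((X s - Xinf) / Xinf) i = 0 := by
      simp only [Pi.div_apply, Pi.sub_apply, mul_div_cancel₀ _ (hXinf₀ _), sum_sub_distrib,
        sum_eq_of_hasDerivAt_mulVec hcol hX s, hmass, sub_self]
    rw [chiSq_eq_sum_mul_sq hXinf₀, neg_mul, neg_le_neg_iff]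
    exact hgap _ hcentered
  refine ⟨lam, hlam, fun t ht => le_exp_neg_mul_of_hasDerivAt_le (f := fun s => chiSq (X s) Xinf)
    (fun s => ?_) hdecay ht⟩
  rw [← two_mul_dotProduct_mulVec_eq_neg_dirichletForm hBrow hBcol,
    ← mulVec_eq_mul_diagonal_mulVec hXinf₀ heq]
  exact hasDerivAt_chiSq (hX · s) Xinf
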